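/- arXiv:1312.1019 — 4 statements merged into one kernel-verified Lean document; each statement's English description precedes it below -/
import Mathlib

section
/- For every γ ∈ (0,π), the improper integral ∫_ℝ (1 + cos γ · cosh(2x sin γ)) / (cosh(2x sin γ) + cos γ)² dx equals 1/sin γ. -/
/-!
For `c > -1` the integrand `(1 + c cosh t) / (cosh t + c)²` is the derivative of
`sinh t / (cosh t + c)`, which tends to `±1` at `±∞`; it decays like `e^{-|t|}`, so its integral
over `ℝ` is `2`. The substitution `t = 2 x sin γ` with `c = cos γ` gives `2 / (2 sin γ)`.
-/

open Real Filter Topology MeasureTheory Asymptotics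

theorem hasDerivAt_sinh_div_cosh_add {c t : ℝ} (h : cosh t + c ≠ 0) :
    HasDerivAt (fun t => sinh t / (cosh t + c)) ((1 + c * cosh t) / (cosh t + c) ^ 2) t := by
  refine ((hasDerivAt_sinh t).div ((hasDerivAt_cosh t).add_const c) h).congr_deriv ?_
  linear_combination (cosh_sq_sub_sinh_sq t) / (cosh t + c) ^ 2

theorem sinh_div_cosh_add_eq (c u : ℝ) :
    sinh u / (cosh u + c) = (1 - exp (-u) ^ 2) / (1 + exp (-u) ^ 2 + 2 * c * exp (-u)) := by
  have he : exp u * exp (-u) = 1 := by rw [← exp_add, add_neg_cancel, exp_zero]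
  rw [← mul_div_mul_left _ _ (mul_ne_zero two_ne_zero (exp_pos (-u)).ne'), sinh_eq, cosh_eq]
  congr 1 <;> linear_combination he

theorem tendsto_sinh_div_cosh_add_atTop (c : ℝ) :
    Tendsto (fun t => sinh t / (cosh t + c)) atTop (𝓝 1) := by
  have he : Tendsto (fun u => exp (-u)) atTop (𝓝 0) :=
    tendsto_exp_atBot.comp tendsto_neg_atTop_atBot
  have hg : ContinuousAt (fun e : ℝ => (1 - e ^ 2) / (1 + e ^ 2 + 2 * c * e)) 0 :=
    ContinuousAt.div (by fun_prop) (by fun_prop) (by norm_num)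
  simpa [Function.comp_def, sinh_div_cosh_add_eq] using hg.tendsto.comp he

theorem tendsto_sinh_div_cosh_add_atBot (c : ℝ) :
    Tendsto (fun t => sinh t / (cosh t + c)) atBot (𝓝 (-1)) := by
  simpa [neg_div] using ((tendsto_sinh_div_cosh_add_atTop c).comp tendsto_neg_atBot_atTop).neg

theorem one_add_mul_cosh_div_sq_isBigO_exp_neg (c : ℝ) :
    (fun t => (1 + c * cosh t) / (cosh t + c) ^ 2) =O[atTop] fun t => exp (-1 * t) := by
  have hlarge : ∀ᶠ t in atTop, 4 * |c| ≤ exp t := tendsto_exp_atTop.eventually_ge_atTop _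
  refine IsBigO.of_bound (8 * (1 + |c|)) (hlarge.mono fun t ht => ?_)
  have hexp : exp t ≤ 2 * cosh t := by rw [cosh_eq]; linarith [exp_pos (-t)]
  have hcosh : 1 ≤ cosh t := one_le_cosh t
  have hden : cosh t / 2 ≤ cosh t + c := by linarith [neg_abs_le c]
  have hnum : |1 + c * cosh t| ≤ (1 + |c|) * cosh t := by
    calc |1 + c * cosh t| ≤ 1 + |c| * cosh t := by
          simpa [abs_mul, abs_of_pos (cosh_pos t)] using abs_add_le 1 (c * cosh t)
      _ ≤ (1 + |c|) * cosh t := by nlinarith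
  rw [norm_div, norm_pow, Real.norm_eq_abs, Real.norm_eq_abs, Real.norm_eq_abs,
    abs_of_pos (by linarith : 0 < cosh t + c), abs_of_pos (exp_pos _), neg_one_mul, exp_neg,
    ← div_eq_mul_inv]
  calc |1 + c * cosh t| / (cosh t + c) ^ 2 ≤ (1 + |c|) * cosh t / (cosh t / 2) ^ 2 := by
        gcongr
    _ = 8 * (1 + |c|) / (2 * cosh t) := by field_simp; ring
    _ ≤ 8 * (1 + |c|) / exp t := by gcongr

theorem integrable_one_add_mul_cosh_div_sq {c : ℝ} (hc : -1 < c) :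
    Integrable fun t => (1 + c * cosh t) / (cosh t + c) ^ 2 := by
  have hden : ∀ t, 0 < cosh t + c := fun t => by linarith [one_le_cosh t]
  have hcont : Continuous fun t => (1 + c * cosh t) / (cosh t + c) ^ 2 :=
    Continuous.div (by fun_prop) (by fun_prop) fun t => (pow_pos (hden t) 2).ne'
  exact hcont.locallyIntegrable.integrable_of_isBigO_atTop_of_norm_isNegInvariant
    (.of_forall fun t => by simp) (one_add_mul_cosh_div_sq_isBigO_exp_neg c)
    ⟨Set.Ioi 0, Ioi_mem_atTop 0, exp_neg_integrableOn_Ioi 0 one_pos⟩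

theorem integral_one_add_mul_cosh_div_sq {c : ℝ} (hc : -1 < c) :
    ∫ t, (1 + c * cosh t) / (cosh t + c) ^ 2 = 2 := by
  have hden : ∀ t, cosh t + c ≠ 0 := fun t => by linarith [one_le_cosh t]
  rw [integral_of_hasDerivAt_of_tendsto (fun t => hasDerivAt_sinh_div_cosh_add (hden t))
    (integrable_one_add_mul_cosh_div_sq hc) (tendsto_sinh_div_cosh_add_atBot c)
    (tendsto_sinh_div_cosh_add_atTop c)]
  norm_num

/-- The explicit integral arising in the Lyapunov–Schmidt bifurcation equation. -/
theorem mtm_integral_eval (γ : ℝ) (hγ : γ ∈ Set.Ioo 0 Real.pi) :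
    ∫ x : ℝ, (1 + Real.cos γ * Real.cosh (2 * x * Real.sin γ)) /
      (Real.cosh (2 * x * Real.sin γ) + Real.cos γ) ^ 2 = 1 / Real.sin γ := by
  have hsin : 0 < sin γ := sin_pos_of_pos_of_lt_pi hγ.1 hγ.2
  have hcos : -1 < cos γ := by
    simpa using cos_lt_cos_of_nonneg_of_le_pi hγ.1.le le_rfl hγ.2
  simp_rw [mul_right_comm 2 _ (sin γ)]
  rw [Measure.integral_comp_mul_left (fun t => (1 + cos γ * cosh t) / (cosh t + cos γ) ^ 2),
    integral_one_add_mul_cosh_div_sq hcos, abs_of_pos (by positivity), smul_eq_mul]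
  field_simp
end

section
/- Let γ ∈ (0,π) and define the 2×2 matrix-valued function M_γ(x) with entries M_γ(1,1) = -sin γ/2, M_γ(2,2) = sin γ/2, M_γ(1,2) = (i/2)(e^{-iγ/2} conj(u_γ(x)) - e^{iγ/2} conj(v_γ(x))), M_γ(2,1) = (i/2)(e^{-iγ/2} u_γ(x) - e^{iγ/2} v_γ(x)), where u_γ(x) = i sin γ sech(x sin γ - iγ/2) and v_γ(x) = -i sin γ sech(x sin γ + iγ/2). Then the vector φ_γ(x) = (e^{(x/2) sin γ}, e^{-(x/2) sin γ})ᵗ |sech(x sin γ - iγ/2)| satisfies φ_γ'(x) = M_γ(x) φ_γ(x) for all x ∈ ℝ. -/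
noncomputable def sech (z : ℂ) : ℂ := (Complex.cosh z)⁻¹

noncomputable def uSol (γ x : ℝ) : ℂ :=
  Complex.I * Real.sin γ * sech ((x : ℂ) * Real.sin γ - Complex.I * γ / 2)

noncomputable def vSol (γ x : ℝ) : ℂ :=
  -Complex.I * Real.sin γ * sech ((x : ℂ) * Real.sin γ + Complex.I * γ / 2)

noncomputable def Mmat (γ x : ℝ) : Matrix (Fin 2) (Fin 2) ℂ :=
  !![-(Real.sin γ : ℂ) / 2,
     (Complex.I / 2) * (Complex.exp (-Complex.I * γ / 2) * (starRingEnd ℂ) (uSol γ x)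
        - Complex.exp (Complex.I * γ / 2) * (starRingEnd ℂ) (vSol γ x));
     (Complex.I / 2) * (Complex.exp (-Complex.I * γ / 2) * uSol γ x
        - Complex.exp (Complex.I * γ / 2) * vSol γ x),
     (Real.sin γ : ℂ) / 2]

noncomputable def phiVec (γ x : ℝ) : Fin 2 → ℂ :=
  ![((Real.exp (x / 2 * Real.sin γ) *
      ‖sech ((x : ℂ) * Real.sin γ - Complex.I * γ / 2)‖ : ℝ) : ℂ),
    ((Real.exp (-(x / 2) * Real.sin γ) *
      ‖sech ((x : ℂ) * Real.sin γ - Complex.I * γ / 2)‖ : ℝ) : ℂ)]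

/-! The vector is `φ = ρ · (e^{t/2}, e^{-t/2})` with `t = x sin γ` and `ρ = |sech z|`,
`z = t - iγ/2`. Since `cosh z · cosh z̄ = (cosh 2t + cos γ)/2`, which is positive for
`γ ∈ (0, π)`, we get `ρ'/ρ = -sin γ · sinh 2t / (cosh 2t + cos γ)`. In the coordinates
`E = e^t`, `ω = e^{iγ/2}` the entries of `M_γ` are rational functions that turn out to be real,
and both rows of `φ' = M_γ φ` reduce to `cosh 2t ∓ sinh 2t = e^{∓2t}`. -/

open Complex ComplexConjugate

theorem HasDerivAt.sqrt_inv {f : ℝ → ℝ} {f' x : ℝ} (hf : HasDerivAt f f' x) (hx : 0 < f x) :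
    HasDerivAt (fun y => (√(f y))⁻¹) (-(f' / (2 * f x)) * (√(f x))⁻¹) x := by
  refine ((hf.sqrt hx.ne').inv (Real.sqrt_pos.2 hx).ne').congr_deriv ?_
  rw [Real.sq_sqrt hx.le]
  field_simp

namespace Complex

theorem sq_norm_cosh (z : ℂ) :
    ‖cosh z‖ ^ 2 = (Real.cosh (2 * z.re) + Real.cos (2 * z.im)) / 2 := by
  have h : cosh z * conj (cosh z) = (cosh (z + conj z) + cosh (z - conj z)) / 2 := by
    rw [← cosh_conj, cosh_add, cosh_sub]; ring
  rw [mul_conj, add_conj, sub_conj, cosh_mul_I] at h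
  rw [← normSq_eq_norm_sq]
  exact_mod_cast h

theorem cosh_two_mul_eq_exp (z : ℂ) : cosh (2 * z) = (exp z ^ 2 + (exp z)⁻¹ ^ 2) / 2 := by
  rw [cosh, ← exp_neg, ← exp_nat_mul, ← exp_nat_mul]; push_cast; ring_nf

theorem exp_mul_I_eq_exp_half_sq (z : ℂ) : exp (z * I) = exp (I * z / 2) ^ 2 := by
  rw [← exp_nat_mul]; ring_nf

theorem ofReal_sin_eq_exp_half (γ : ℝ) :
    (Real.sin γ : ℂ) = ((exp (I * γ / 2))⁻¹ ^ 2 - exp (I * γ / 2) ^ 2) * I / 2 := by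
  rw [ofReal_sin, sin, neg_mul, exp_neg, exp_mul_I_eq_exp_half_sq, inv_pow]

theorem ofReal_cos_eq_exp_half (γ : ℝ) :
    (Real.cos γ : ℂ) = (exp (I * γ / 2) ^ 2 + (exp (I * γ / 2))⁻¹ ^ 2) / 2 := by
  rw [ofReal_cos, cos, neg_mul, exp_neg, exp_mul_I_eq_exp_half_sq, inv_pow]

end Complex

theorem sech_eq_exp (z : ℂ) : sech z = 2 * exp z / (exp z ^ 2 + 1) := by
  have h : exp z ≠ 0 := exp_ne_zero z
  rw [sech, cosh, exp_neg, inv_div,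
    show exp z + (exp z)⁻¹ = (exp z ^ 2 + 1) / exp z by field_simp, div_div_eq_mul_div]

theorem conj_sech (z : ℂ) : conj (sech z) = sech (conj z) := by
  rw [sech, sech, map_inv₀, cosh_conj]

theorem cosh_two_mul_add_cos_pos {γ : ℝ} (hγ : -1 < Real.cos γ) (t : ℝ) :
    0 < Real.cosh (2 * t) + Real.cos γ := by
  linarith [Real.one_le_cosh (2 * t)]

theorem norm_sech_eq_inv_sqrt (γ y : ℝ) :
    ‖sech (y * Real.sin γ - I * γ / 2)‖ =
      (√((Real.cosh (2 * (y * Real.sin γ)) + Real.cos γ) / 2))⁻¹ := by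
  rw [sech, norm_inv, ← Real.sqrt_sq (norm_nonneg _), Complex.sq_norm_cosh]
  simp [mul_div_cancel₀, sin_ofReal_re]

theorem hasDerivAt_norm_sech {γ : ℝ} (hγ : -1 < Real.cos γ) (x : ℝ) :
    HasDerivAt (fun y : ℝ => ‖sech (y * Real.sin γ - I * γ / 2)‖)
      (-(Real.sin γ * Real.sinh (2 * (x * Real.sin γ)) /
          (Real.cosh (2 * (x * Real.sin γ)) + Real.cos γ)) *
        ‖sech (x * Real.sin γ - I * γ / 2)‖) x := by
  simp_rw [norm_sech_eq_inv_sqrt]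
  have hK : HasDerivAt (fun y => (Real.cosh (2 * (y * Real.sin γ)) + Real.cos γ) / 2)
      (Real.sin γ * Real.sinh (2 * (x * Real.sin γ))) x := by
    refine ((((hasDerivAt_mul_const (Real.sin γ)).const_mul 2).cosh.add_const
      (Real.cos γ)).div_const 2).congr_deriv ?_
    ring
  convert hK.sqrt_inv (half_pos (cosh_two_mul_add_cos_pos hγ _)) using 2
  field_simp

theorem Mmat_zero_zero (γ x : ℝ) : Mmat γ x 0 0 = ((-(Real.sin γ) / 2 : ℝ) : ℂ) := by
  simp [Mmat]

theorem Mmat_one_one (γ x : ℝ) : Mmat γ x 1 1 = ((Real.sin γ / 2 : ℝ) : ℂ) := by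
  simp [Mmat]

theorem Mmat_zero_one_and_one_zero (γ x : ℝ)
    (hD : Real.cosh (2 * (x * Real.sin γ)) + Real.cos γ ≠ 0) :
    Mmat γ x 0 1 =
        ((Real.sin γ * (Real.exp (-(x * Real.sin γ)) + Real.exp (x * Real.sin γ) * Real.cos γ) /
          (Real.cosh (2 * (x * Real.sin γ)) + Real.cos γ) : ℝ) : ℂ) ∧
      Mmat γ x 1 0 =
        ((-(Real.sin γ * (Real.exp (x * Real.sin γ) + Real.exp (-(x * Real.sin γ)) * Real.cos γ)) /
          (Real.cosh (2 * (x * Real.sin γ)) + Real.cos γ) : ℝ) : ℂ) := by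
  have hD' : cosh (2 * ((x : ℂ) * Real.sin γ)) + Real.cos γ ≠ 0 := by exact_mod_cast hD
  refine ⟨?_, ?_⟩ <;>
  · simp only [Mmat, uSol, vSol, Matrix.of_apply, Matrix.cons_val', Matrix.cons_val_zero,
      Matrix.cons_val_one, Matrix.empty_val', Matrix.cons_val_fin_one, map_mul, map_neg, conj_sech,
      map_sub, map_add, map_div₀, conj_ofReal, conj_I, map_ofNat, ofReal_div, ofReal_mul,
      ofReal_add, ofReal_exp, ofReal_neg, ofReal_cosh, ofReal_ofNat, neg_mul, neg_div,
      sub_neg_eq_add, ← sub_eq_add_neg, neg_neg, exp_neg]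
    rw [sech_eq_exp, sech_eq_exp, exp_add, exp_sub, cosh_two_mul_eq_exp] at *
    have hE := exp_ne_zero ((x : ℂ) * Real.sin γ)
    generalize exp ((x : ℂ) * Real.sin γ) = E at *
    rw [ofReal_sin_eq_exp_half, ofReal_cos_eq_exp_half] at *
    have hω := exp_ne_zero (I * γ / 2)
    generalize exp (I * γ / 2) = ω at *
    -- `2E²ω²(cosh 2t + cos γ)`, factored into the denominators of `sech z` and `sech z̄`
    have hprod : (E ^ 2 + ω ^ 2) * (ω ^ 2 * E ^ 2 + 1) ≠ 0 := fun h =>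
      hD' (by field_simp; linear_combination h)
    have hden := left_ne_zero_of_mul hprod
    have hden_conj := right_ne_zero_of_mul hprod
    have hprod' : ω ^ 2 * (E ^ 4 + 1) + E ^ 2 * (ω ^ 4 + 1) ≠ 0 := by convert hprod using 1; ring
    field_simp
    rw [I_sq]
    ring

theorem exp_half_mul_cosh_two_mul_sub_sinh (t c : ℝ) :
    Real.exp (t / 2) * (Real.cosh (2 * t) + c - Real.sinh (2 * t)) =
      Real.exp (-(t / 2)) * (Real.exp (-t) + Real.exp t * c) := by
  rw [add_sub_right_comm, Real.cosh_sub_sinh]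
  simp only [mul_add, ← mul_assoc, ← Real.exp_add]
  ring_nf

theorem exp_neg_half_mul_cosh_two_mul_add_sinh (t c : ℝ) :
    Real.exp (-(t / 2)) * (Real.cosh (2 * t) + c + Real.sinh (2 * t)) =
      Real.exp (t / 2) * (Real.exp t + Real.exp (-t) * c) := by
  rw [add_right_comm, Real.cosh_add_sinh]
  simp only [mul_add, ← mul_assoc, ← Real.exp_add]
  ring_nf

-- The right-hand sides are the product-rule derivatives of the two components of `phiVec`.
theorem Mmat_mulVec_phiVec_zero (γ x : ℝ)
    (hD : Real.cosh (2 * (x * Real.sin γ)) + Real.cos γ ≠ 0) :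
    (Mmat γ x).mulVec (phiVec γ x) 0 =
      ((Real.exp (x / 2 * Real.sin γ) * (1 / 2 * Real.sin γ) * ‖sech (x * Real.sin γ - I * γ / 2)‖ +
        Real.exp (x / 2 * Real.sin γ) *
          (-(Real.sin γ * Real.sinh (2 * (x * Real.sin γ)) /
              (Real.cosh (2 * (x * Real.sin γ)) + Real.cos γ)) *
            ‖sech (x * Real.sin γ - I * γ / 2)‖) : ℝ) : ℂ) := by
  simp only [Matrix.mulVec, dotProduct, Fin.sum_univ_two, Mmat_zero_zero,
    (Mmat_zero_one_and_one_zero γ x hD).1, phiVec, Matrix.cons_val_zero, Matrix.cons_val_one]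
  norm_cast
  have key := exp_half_mul_cosh_two_mul_sub_sinh (x * Real.sin γ) (Real.cos γ)
  rw [show x / 2 * Real.sin γ = x * Real.sin γ / 2 by ring,
    show -(x / 2) * Real.sin γ = -(x * Real.sin γ / 2) by ring]
  generalize x * Real.sin γ = t at *
  generalize ‖sech _‖ = ρ
  linear_combination (-(Real.sin γ * ρ / (Real.cosh (2 * t) + Real.cos γ))) * key +
    Real.exp (t / 2) * Real.sin γ * ρ * mul_inv_cancel₀ hD

theorem Mmat_mulVec_phiVec_one (γ x : ℝ)
    (hD : Real.cosh (2 * (x * Real.sin γ)) + Real.cos γ ≠ 0) :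
    (Mmat γ x).mulVec (phiVec γ x) 1 =
      ((Real.exp (-(x / 2) * Real.sin γ) * (-(1 / 2) * Real.sin γ) *
          ‖sech (x * Real.sin γ - I * γ / 2)‖ +
        Real.exp (-(x / 2) * Real.sin γ) *
          (-(Real.sin γ * Real.sinh (2 * (x * Real.sin γ)) /
              (Real.cosh (2 * (x * Real.sin γ)) + Real.cos γ)) *
            ‖sech (x * Real.sin γ - I * γ / 2)‖) : ℝ) : ℂ) := by
  simp only [Matrix.mulVec, dotProduct, Fin.sum_univ_two, Mmat_one_one,
    (Mmat_zero_one_and_one_zero γ x hD).2, phiVec, Matrix.cons_val_zero, Matrix.cons_val_one]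
  norm_cast
  have key := exp_neg_half_mul_cosh_two_mul_add_sinh (x * Real.sin γ) (Real.cos γ)
  rw [show x / 2 * Real.sin γ = x * Real.sin γ / 2 by ring,
    show -(x / 2) * Real.sin γ = -(x * Real.sin γ / 2) by ring]
  generalize x * Real.sin γ = t at *
  generalize ‖sech _‖ = ρ
  linear_combination (Real.sin γ * ρ / (Real.cosh (2 * t) + Real.cos γ)) * key -
    Real.exp (-(t / 2)) * Real.sin γ * ρ * mul_inv_cancel₀ hD

/-- The decaying eigenvector satisfies φ' = M_γ φ. -/
theorem phiVec_hasDerivAt (γ : ℝ) (hγ : γ ∈ Set.Ioo 0 Real.pi) (x : ℝ) :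
    HasDerivAt (fun y : ℝ => phiVec γ y) ((Mmat γ x).mulVec (phiVec γ x)) x := by
  have hcos : -1 < Real.cos γ := by
    simpa using Real.cos_lt_cos_of_nonneg_of_le_pi hγ.1.le le_rfl hγ.2
  have hD := (cosh_two_mul_add_cos_pos hcos (x * Real.sin γ)).ne'
  have hρ := hasDerivAt_norm_sech hcos x
  have hp : HasDerivAt (fun y : ℝ => y / 2 * Real.sin γ) (1 / 2 * Real.sin γ) x :=
    ((hasDerivAt_id x).div_const 2).mul_const _
  have hq : HasDerivAt (fun y : ℝ => -(y / 2) * Real.sin γ) (-(1 / 2) * Real.sin γ) x :=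
    ((hasDerivAt_id x).div_const 2).neg.mul_const _
  refine hasDerivAt_pi.2 (Fin.forall_fin_two.2 ⟨?_, ?_⟩)
  · rw [Mmat_mulVec_phiVec_zero γ x hD]
    exact (hp.exp.mul hρ).ofReal_comp
  · rw [Mmat_mulVec_phiVec_one γ x hD]
    exact (hq.exp.mul hρ).ofReal_comp
end

section
/- Let γ ∈ (0,π) and M_γ be as in the eigenvector lemma for the MTM soliton. Then the vector η_γ(x) = (e^{-(x/2) sin γ}, -e^{(x/2) sin γ})ᵗ |sech(x sin γ - iγ/2)| satisfies η_γ'(x) = -M_γ(x)* η_γ(x) for all x ∈ ℝ, where M* denotes the conjugate transpose. -/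
noncomputable def etaVec (γ x : ℝ) : Fin 2 → ℂ :=
  ![((Real.exp (-(x / 2) * Real.sin γ) *
      ‖sech ((x : ℂ) * Real.sin γ - Complex.I * γ / 2)‖ : ℝ) : ℂ),
    ((-(Real.exp (x / 2 * Real.sin γ) *
      ‖sech ((x : ℂ) * Real.sin γ - Complex.I * γ / 2)‖) : ℝ) : ℂ)]

/-!
Since `v_γ = conj u_γ`, each off-diagonal entry of `M_γ(x)` has the form `(i/2)(conj z - z) = Im z`,
so `M_γ(x)` is real and `M_γ(x)* = M_γ(x)ᵀ`. Writing `C, S = cosh, sinh (x sin γ)`, one has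
`|cosh (x sin γ - iγ/2)|² = S² + cos²(γ/2)`, and the off-diagonal entries are
`± sin γ (C cos²(γ/2) ∓ S sin²(γ/2)) / (S² + cos²(γ/2))`. The claim becomes a real ODE, which is
checked by differentiating, using `e^{x sin γ} = C + S`.
-/

open Complex ComplexConjugate Matrix

lemma Complex.cosh_ofReal_sub_ofReal_mul_I (u v : ℝ) :
    cosh (u - v * I) = (Real.cosh u * Real.cos v : ℝ) - (Real.sinh u * Real.sin v : ℝ) * I := by
  rw [cosh_sub, cosh_mul_I, sinh_mul_I]
  push_cast
  ring

lemma Complex.normSq_cosh_ofReal_sub_ofReal_mul_I (u v : ℝ) :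
    normSq (cosh (u - v * I)) = Real.sinh u ^ 2 + Real.cos v ^ 2 := by
  rw [cosh_ofReal_sub_ofReal_mul_I, normSq_apply]
  simp only [sub_re, sub_im, mul_re, mul_im, ofReal_re, ofReal_im, I_re, I_im]
  linear_combination Real.cos v ^ 2 * Real.cosh_sq u + Real.sinh u ^ 2 * Real.sin_sq_add_cos_sq v

lemma Complex.I_div_two_mul_conj_sub (z : ℂ) : I / 2 * (conj z - z) = z.im := by
  rw [← neg_sub, sub_conj]
  push_cast
  linear_combination (-(z.im : ℂ)) * I_sq

lemma HasDerivAt.ofReal_comp_pi {ι : Type*} [Fintype ι] {f : ℝ → ι → ℝ} {f' : ι → ℝ} {x : ℝ}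
    (hf : HasDerivAt f f' x) : HasDerivAt (fun y i => (f y i : ℂ)) (fun i => (f' i : ℂ)) x :=
  hasDerivAt_pi.2 fun i => (hasDerivAt_pi.1 hf i).ofReal_comp

section

variable (γ x : ℝ)

lemma ofReal_mul_sin_sub_I_mul_div_two :
    (x : ℂ) * Real.sin γ - I * γ / 2 = (x * Real.sin γ : ℝ) - (γ / 2 : ℝ) * I := by
  push_cast
  ring

noncomputable def coshNormSq : ℝ := Real.sinh (x * Real.sin γ) ^ 2 + Real.cos (γ / 2) ^ 2

lemma norm_sech_eq : ‖sech ((x : ℂ) * Real.sin γ - I * γ / 2)‖ = (√(coshNormSq γ x))⁻¹ := by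
  rw [sech, norm_inv, norm_def, ofReal_mul_sin_sub_I_mul_div_two,
    normSq_cosh_ofReal_sub_ofReal_mul_I, coshNormSq]

lemma vSol_eq_conj_uSol : vSol γ x = conj (uSol γ x) := by
  rw [vSol, uSol, sech, sech, map_mul, map_mul, map_inv₀, ← cosh_conj]
  simp only [map_sub, map_mul, conj_ofReal, conj_I, map_div₀, map_ofNat]
  ring_nf

lemma im_exp_mul_uSol (t : ℝ) : (exp (t * I) * uSol γ x).im = Real.sin γ *
    (Real.cosh (x * Real.sin γ) * Real.cos (γ / 2) * Real.cos t
      - Real.sinh (x * Real.sin γ) * Real.sin (γ / 2) * Real.sin t) / coshNormSq γ x := by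
  rw [uSol, sech, ofReal_mul_sin_sub_I_mul_div_two, exp_mul_I, ← ofReal_cos, ← ofReal_sin,
    coshNormSq, ← normSq_cosh_ofReal_sub_ofReal_mul_I, cosh_ofReal_sub_ofReal_mul_I]
  simp only [mul_im, mul_re, inv_re, inv_im, add_re, add_im, sub_re, sub_im, ofReal_re, ofReal_im,
    I_re, I_im]
  ring

lemma exp_neg_I_mul_div_two : exp (-I * γ / 2) = conj (exp (I * γ / 2)) := by
  rw [← exp_conj]
  simp only [map_div₀, map_mul, conj_I, conj_ofReal, map_ofNat]

noncomputable def MmatRe : Matrix (Fin 2) (Fin 2) ℝ :=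
  !![-(Real.sin γ / 2), (exp (I * γ / 2) * uSol γ x).im;
     -(exp (-I * γ / 2) * uSol γ x).im, Real.sin γ / 2]

lemma Mmat_eq_map_ofReal : Mmat γ x = (MmatRe γ x).map ofReal := by
  rw [Mmat, MmatRe, vSol_eq_conj_uSol, conj_conj, exp_neg_I_mul_div_two]
  ext i j
  fin_cases i <;> fin_cases j <;>
    simp only [Fin.zero_eta, Fin.mk_one, Fin.isValue, of_apply, cons_val', cons_val_zero,
      cons_val_one, cons_val_fin_one, map_apply]
  · push_cast; ring
  · rw [← map_mul, I_div_two_mul_conj_sub]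
  · rw [ofReal_neg, ← I_div_two_mul_conj_sub, map_mul, conj_conj]
    ring
  · push_cast; rfl

lemma MmatRe_eq : MmatRe γ x =
    !![-(Real.sin γ / 2), Real.sin γ * (Real.cosh (x * Real.sin γ) * Real.cos (γ / 2) ^ 2
        - Real.sinh (x * Real.sin γ) * Real.sin (γ / 2) ^ 2) / coshNormSq γ x;
      -(Real.sin γ * (Real.cosh (x * Real.sin γ) * Real.cos (γ / 2) ^ 2
        + Real.sinh (x * Real.sin γ) * Real.sin (γ / 2) ^ 2) / coshNormSq γ x),
      Real.sin γ / 2] := by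
  rw [MmatRe, show I * γ / 2 = ((γ / 2 : ℝ) : ℂ) * I by push_cast; ring,
    show -I * γ / 2 = ((-(γ / 2) : ℝ) : ℂ) * I by push_cast; ring, im_exp_mul_uSol,
    im_exp_mul_uSol, Real.cos_neg, Real.sin_neg]
  ext i j
  fin_cases i <;> fin_cases j <;> simp only [of_apply, cons_val', cons_val_zero, cons_val_one,
    cons_val_fin_one, Fin.zero_eta, Fin.mk_one, Fin.isValue] <;> ring

noncomputable def etaRe : Fin 2 → ℝ :=
  ![Real.exp (-(x / 2) * Real.sin γ) * (√(coshNormSq γ x))⁻¹,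
    -(Real.exp (x / 2 * Real.sin γ) * (√(coshNormSq γ x))⁻¹)]

lemma etaVec_eq_ofReal_etaRe : etaVec γ x = fun i => (etaRe γ x i : ℂ) := by
  simp only [etaVec, norm_sech_eq]
  ext i
  fin_cases i <;> rfl

variable {γ}

lemma coshNormSq_pos (hc : Real.cos (γ / 2) ≠ 0) : 0 < coshNormSq γ x := by
  unfold coshNormSq
  positivity

lemma hasDerivAt_coshNormSq :
    HasDerivAt (coshNormSq γ)
      (2 * Real.sin γ * Real.sinh (x * Real.sin γ) * Real.cosh (x * Real.sin γ)) x := by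
  have h := (((hasDerivAt_mul_const (x := x) (Real.sin γ)).sinh).pow 2).add_const
    (Real.cos (γ / 2) ^ 2)
  refine h.congr_deriv ?_
  push_cast
  ring

lemma hasDerivAt_inv_sqrt_coshNormSq (hc : Real.cos (γ / 2) ≠ 0) :
    HasDerivAt (fun y => (√(coshNormSq γ y))⁻¹)
      (-(Real.sin γ * Real.sinh (x * Real.sin γ) * Real.cosh (x * Real.sin γ) / coshNormSq γ x)
        * (√(coshNormSq γ x))⁻¹) x := by
  have hG := coshNormSq_pos x hc
  have hsqrt := ((hasDerivAt_coshNormSq x).sqrt hG.ne').inv (Real.sqrt_pos.2 hG).ne'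
  refine hsqrt.congr_deriv ?_
  rw [Real.sq_sqrt hG.le]
  field_simp

lemma hasDerivAt_etaRe (hc : Real.cos (γ / 2) ≠ 0) :
    HasDerivAt (etaRe γ) (-(MmatRe γ x)ᵀ *ᵥ etaRe γ x) x := by
  have hr := hasDerivAt_inv_sqrt_coshNormSq x hc
  have hE := (((hasDerivAt_id x).div_const 2).mul_const (Real.sin γ)).exp
  have hE' := (((hasDerivAt_id x).div_const 2).neg.mul_const (Real.sin γ)).exp
  simp only [id, Pi.neg_apply] at hE hE'
  refine hasDerivAt_pi.2 (Fin.forall_fin_two.2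
    ⟨(hE'.mul hr).congr_deriv ?_, (hE.mul hr).neg.congr_deriv ?_⟩) <;>
  simp only [MmatRe_eq, mulVec, dotProduct, Fin.sum_univ_two, Matrix.neg_apply, transpose_apply,
    etaRe, of_apply, cons_val', cons_val_zero, cons_val_one, cons_val_fin_one, Fin.isValue] <;>
  rw [show Real.exp (-(x / 2) * Real.sin γ) = (Real.exp (x / 2 * Real.sin γ))⁻¹ by
    rw [← Real.exp_neg]; ring_nf]
  all_goals
    have hG := coshNormSq_pos x hc
    have hE_ne := (Real.exp_pos (x / 2 * Real.sin γ)).ne'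
    have hexp : Real.exp (x / 2 * Real.sin γ) ^ 2 =
        Real.cosh (x * Real.sin γ) + Real.sinh (x * Real.sin γ) := by
      rw [Real.cosh_add_sinh, ← Real.exp_nat_mul]; ring_nf
    have hcosh := Real.cosh_sq (x * Real.sin γ)
    have htrig := Real.sin_sq_add_cos_sq (γ / 2)
    unfold coshNormSq at hG ⊢
    generalize Real.exp (x / 2 * Real.sin γ) = E at hexp hE_ne ⊢
    generalize Real.cosh (x * Real.sin γ) = C at hexp hcosh ⊢
    generalize Real.sinh (x * Real.sin γ) = S at hexp hcosh hG ⊢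
    have hsqrt_ne : √(S ^ 2 + Real.cos (γ / 2) ^ 2) ≠ 0 := (Real.sqrt_pos.2 hG).ne'
    field_simp
  -- The two components reduce to `(C ± S) (C cos²(γ/2) ± S sin²(γ/2)) = S² + cos²(γ/2) ± S C`.
  · linear_combination 2 * Real.sin γ * (Real.cos (γ / 2) ^ 2 * C + S * Real.sin (γ / 2) ^ 2) * hexp
      + 2 * Real.sin γ * Real.cos (γ / 2) ^ 2 * hcosh + 2 * Real.sin γ * (S ^ 2 + S * C) * htrig
  · linear_combination -2 * Real.sin γ * (S ^ 2 + Real.cos (γ / 2) ^ 2 - S * C) * hexp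
      + 2 * Real.sin γ * S * hcosh - 2 * Real.sin γ * S * htrig

end

/-- The adjoint null vector satisfies η' = -M_γ* η. -/
theorem etaVec_hasDerivAt (γ : ℝ) (hγ : γ ∈ Set.Ioo 0 Real.pi) (x : ℝ) :
    HasDerivAt (fun y : ℝ => etaVec γ y) ((-(Mmat γ x).conjTranspose).mulVec (etaVec γ x)) x := by
  have hc : Real.cos (γ / 2) ≠ 0 :=
    (Real.cos_pos_of_mem_Ioo ⟨by linarith [hγ.1, Real.pi_pos], by linarith [hγ.2]⟩).ne'
  have hM : -(Mmat γ x)ᴴ = (-(MmatRe γ x)ᵀ).map ofRealHom := by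
    rw [Mmat_eq_map_ofReal, ← conjTranspose_map _ fun a => (conj_ofReal a).symm,
      conjTranspose_eq_transpose_of_trivial]
    exact (Matrix.map_neg _ ofReal_neg _).symm
  rw [funext (etaVec_eq_ofReal_etaRe γ), hM]
  exact (hasDerivAt_etaRe x hc).ofReal_comp_pi.congr_deriv
    (funext fun i => RingHom.map_mulVec ofRealHom _ _ i)
end

section
/- Let λ = δ e^{iγ/2} with δ > 0 and γ ∈ (0,π), and let φ = (φ₁,φ₂)ᵗ with φ₁(x,t) = exp((i/4)(λ²-λ⁻²)x + (i/4)(λ²+λ⁻²)t), φ₂(x,t) = exp(-(i/4)(λ²-λ⁻²)x - (i/4)(λ²+λ⁻²)t). Then the Bäcklund expressions u = 2i δ⁻¹ sin γ · conj(φ₁)φ₂ / (e^{iγ/2}|φ₁|² + e^{-iγ/2}|φ₂|²) and v = -2i δ sin γ · conj(φ₁)φ₂ / (e^{-iγ/2}|φ₁|² + e^{iγ/2}|φ₂|²) equal the MTM soliton: u(x,t) = i δ⁻¹ sin γ sech(α(x+νt) - iγ/2) e^{-iβ(t+νx)} and v(x,t) = -i δ sin γ sech(α(x+νt) + iγ/2)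 e^{-iβ(t+νx)}, where ν = (δ²-δ⁻²)/(δ²+δ⁻²), α = ((δ²+δ⁻²)/2) sin γ, β = ((δ²+δ⁻²)/2) cos γ. -/
/-!
Write `z` for the common exponent, so that `φ₁ = exp z` and `φ₂ = exp (-z)`. Since
`l² = δ² e^{iγ}` and `l⁻² = δ⁻² e^{-iγ}`, one finds `-2 Re z = α (x + ν t)` and
`2 Im z = β (t + ν x)`. The numerator `conj φ₁ · φ₂ = e^{-2i Im z}` is then the phase of the
soliton, while `|φ₁|² = e^{2 Re z}` and `|φ₂|² = e^{-2 Re z}` turn the denominator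
`e^{±iγ/2}|φ₁|² + e^{∓iγ/2}|φ₂|²` into `2 cosh (-2 Re z ∓ iγ/2)`.
-/

namespace Complex

open ComplexConjugate

theorem conj_exp_mul_exp_neg (z : ℂ) : conj (exp z) * exp (-z) = exp (-I * (2 * z.im)) := by
  rw [← exp_conj, ← exp_add]
  congr 1
  rw [← sub_eq_add_neg, ← neg_sub, sub_conj]
  push_cast
  ring

theorem ofReal_norm_exp_sq (z : ℂ) : ((‖exp z‖ : ℝ) : ℂ) ^ 2 = exp (2 * z.re) := by
  rw [norm_exp, ofReal_exp, ← exp_nat_mul]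
  push_cast; ring_nf

theorem exp_mul_exp_add_exp_neg_mul_exp_neg (a w : ℂ) :
    exp a * exp w + exp (-a) * exp (-w) = 2 * cosh (a + w) := by
  rw [cosh, ← exp_add, ← exp_add, neg_add]
  ring

theorem sq_ofReal_mul_exp_half (δ γ : ℝ) :
    ((δ : ℂ) * exp (I * γ / 2)) ^ 2 = (δ : ℂ) ^ 2 * (cos γ + sin γ * I) := by
  rw [mul_pow, ← exp_nat_mul, ← exp_mul_I]
  push_cast; ring_nf

theorem inv_sq_ofReal_mul_exp_half (δ γ : ℝ) :
    (((δ : ℂ) * exp (I * γ / 2)) ^ 2)⁻¹ = ((δ : ℂ) ^ 2)⁻¹ * (cos γ - sin γ * I) := by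
  rw [mul_pow, mul_inv, ← exp_nat_mul, ← exp_neg,
    show -(((2 : ℕ) : ℂ) * (I * γ / 2)) = -γ * I by push_cast; ring, exp_mul_I, cos_neg, sin_neg]
  ring

end Complex

open Complex ComplexConjugate

theorem backlund_quotient_exp (c a z : ℂ) :
    c * conj (exp z) * exp (-z) /
        (exp a * ((‖exp z‖ : ℝ) : ℂ) ^ 2 + exp (-a) * ((‖exp (-z)‖ : ℝ) : ℂ) ^ 2) =
      c / 2 * sech (((-2 * z.re : ℝ) : ℂ) - a) * exp (-I * (2 * z.im)) := by
  rw [mul_assoc c, conj_exp_mul_exp_neg, ofReal_norm_exp_sq, ofReal_norm_exp_sq, neg_re,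
    ofReal_neg, mul_neg, exp_mul_exp_add_exp_neg_mul_exp_neg, sech, ← cosh_neg]
  push_cast
  ring_nf

theorem lax_exponent_eq (δ γ x t : ℝ) :
    I / 4 * (((δ : ℂ) * exp (I * γ / 2)) ^ 2 - (((δ : ℂ) * exp (I * γ / 2)) ^ 2)⁻¹) * x +
        I / 4 * (((δ : ℂ) * exp (I * γ / 2)) ^ 2 + (((δ : ℂ) * exp (I * γ / 2)) ^ 2)⁻¹) * t =
      ((-(Real.sin γ * ((δ ^ 2 + (δ ^ 2)⁻¹) * x + (δ ^ 2 - (δ ^ 2)⁻¹) * t) / 4) : ℝ) : ℂ) +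
        ((Real.cos γ * ((δ ^ 2 - (δ ^ 2)⁻¹) * x + (δ ^ 2 + (δ ^ 2)⁻¹) * t) / 4 : ℝ) : ℂ) * I := by
  rw [inv_sq_ofReal_mul_exp_half, sq_ofReal_mul_exp_half]
  push_cast
  linear_combination (sin γ * (((δ : ℂ) ^ 2 + ((δ : ℂ) ^ 2)⁻¹) * x +
    ((δ : ℂ) ^ 2 - ((δ : ℂ) ^ 2)⁻¹) * t) / 4) * I_sq

theorem backlund_zero_to_soliton_general (δ γ : ℝ) (hδ : 0 < δ)
    (l : ℂ) (hl : l = (δ : ℂ) * Complex.exp (Complex.I * γ / 2))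
    (φ₁ φ₂ : ℝ → ℝ → ℂ)
    (hφ₁ : ∀ x t : ℝ, φ₁ x t = Complex.exp ((Complex.I / 4) * (l ^ 2 - (l ^ 2)⁻¹) * x +
      (Complex.I / 4) * (l ^ 2 + (l ^ 2)⁻¹) * t))
    (hφ₂ : ∀ x t : ℝ, φ₂ x t = Complex.exp (-((Complex.I / 4) * (l ^ 2 - (l ^ 2)⁻¹) * x) -
      (Complex.I / 4) * (l ^ 2 + (l ^ 2)⁻¹) * t))
    (ν α β : ℝ)
    (hν : ν = (δ ^ 2 - (δ ^ 2)⁻¹) / (δ ^ 2 + (δ ^ 2)⁻¹))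
    (hα : α = (δ ^ 2 + (δ ^ 2)⁻¹) / 2 * Real.sin γ)
    (hβ : β = (δ ^ 2 + (δ ^ 2)⁻¹) / 2 * Real.cos γ) :
    ∀ x t : ℝ,
      (2 * Complex.I * (δ⁻¹ : ℝ) * Real.sin γ * (starRingEnd ℂ) (φ₁ x t) * φ₂ x t) /
        (Complex.exp (Complex.I * γ / 2) * ((‖φ₁ x t‖ : ℝ) : ℂ) ^ 2 +
         Complex.exp (-Complex.I * γ / 2) * ((‖φ₂ x t‖ : ℝ) : ℂ) ^ 2)
        = Complex.I * (δ⁻¹ : ℝ) * Real.sin γ *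
          sech (((α * (x + ν * t) : ℝ) : ℂ) - Complex.I * γ / 2) *
          Complex.exp (-Complex.I * β * (t + ν * x)) ∧
      (-(2 * Complex.I * (δ : ℝ) * Real.sin γ * (starRingEnd ℂ) (φ₁ x t) * φ₂ x t)) /
        (Complex.exp (-Complex.I * γ / 2) * ((‖φ₁ x t‖ : ℝ) : ℂ) ^ 2 +
         Complex.exp (Complex.I * γ / 2) * ((‖φ₂ x t‖ : ℝ) : ℂ) ^ 2)
        = -Complex.I * (δ : ℝ) * Real.sin γ *
          sech (((α * (x + ν * t) : ℝ) : ℂ) + Complex.I * γ / 2) *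
          Complex.exp (-Complex.I * β * (t + ν * x)) := by
  intro x t
  set z := I / 4 * (l ^ 2 - (l ^ 2)⁻¹) * x + I / 4 * (l ^ 2 + (l ^ 2)⁻¹) * t with hz
  have hφ₂z : φ₂ x t = exp (-z) := by rw [hφ₂, hz, neg_add, sub_eq_add_neg]
  have hsum : δ ^ 2 + (δ ^ 2)⁻¹ ≠ 0 := by positivity
  have hre : α * (x + ν * t) = -2 * z.re := by
    rw [hz, hl, lax_exponent_eq, hα, hν]
    simp only [add_re, ofReal_re, re_ofReal_mul, I_re, mul_zero, add_zero]
    field_simp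
    ring
  have him : β * (t + ν * x) = 2 * z.im := by
    rw [hz, hl, lax_exponent_eq, hβ, hν]
    simp only [add_im, ofReal_im, im_ofReal_mul, I_im, mul_one, zero_add]
    field_simp
    ring
  have him' : (β : ℂ) * (t + ν * x) = 2 * z.im := by exact_mod_cast him
  have hneg : -I * γ / 2 = -(I * γ / 2) := by ring
  have hquot := backlund_quotient_exp (2 * I * δ * Real.sin γ) (-(I * γ / 2)) z
  rw [neg_neg, sub_neg_eq_add] at hquot
  rw [hφ₁, ← hz, hφ₂z, hneg, hre, mul_assoc (-I), him']
  constructor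
  · rw [backlund_quotient_exp]
    ring
  · rw [neg_div, hquot]
    ring

/-- The Bäcklund transformation applied to the zero solution with the free
exponential Lax vector produces the one-soliton solution of the MTM system. -/
theorem backlund_zero_to_soliton (δ γ : ℝ) (hδ : 0 < δ) (hγ : γ ∈ Set.Ioo 0 Real.pi)
    (l : ℂ) (hl : l = (δ : ℂ) * Complex.exp (Complex.I * γ / 2))
    (φ₁ φ₂ : ℝ → ℝ → ℂ)
    (hφ₁ : ∀ x t : ℝ, φ₁ x t = Complex.exp ((Complex.I / 4) * (l ^ 2 - (l ^ 2)⁻¹) * x +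
      (Complex.I / 4) * (l ^ 2 + (l ^ 2)⁻¹) * t))
    (hφ₂ : ∀ x t : ℝ, φ₂ x t = Complex.exp (-((Complex.I / 4) * (l ^ 2 - (l ^ 2)⁻¹) * x) -
      (Complex.I / 4) * (l ^ 2 + (l ^ 2)⁻¹) * t))
    (ν α β : ℝ)
    (hν : ν = (δ ^ 2 - (δ ^ 2)⁻¹) / (δ ^ 2 + (δ ^ 2)⁻¹))
    (hα : α = (δ ^ 2 + (δ ^ 2)⁻¹) / 2 * Real.sin γ)
    (hβ : β = (δ ^ 2 + (δ ^ 2)⁻¹) / 2 * Real.cos γ) :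
    ∀ x t : ℝ,
      (2 * Complex.I * (δ⁻¹ : ℝ) * Real.sin γ * (starRingEnd ℂ) (φ₁ x t) * φ₂ x t) /
        (Complex.exp (Complex.I * γ / 2) * ((‖φ₁ x t‖ : ℝ) : ℂ) ^ 2 +
         Complex.exp (-Complex.I * γ / 2) * ((‖φ₂ x t‖ : ℝ) : ℂ) ^ 2)
        = Complex.I * (δ⁻¹ : ℝ) * Real.sin γ *
          sech (((α * (x + ν * t) : ℝ) : ℂ) - Complex.I * γ / 2) *
          Complex.exp (-Complex.I * β * (t + ν * x)) ∧
      (-(2 * Complex.I * (δ : ℝ) * Real.sin γ * (starRingEnd ℂ) (φ₁ x t) * φ₂ x t)) /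
        (Complex.exp (-Complex.I * γ / 2) * ((‖φ₁ x t‖ : ℝ) : ℂ) ^ 2 +
         Complex.exp (Complex.I * γ / 2) * ((‖φ₂ x t‖ : ℝ) : ℂ) ^ 2)
        = -Complex.I * (δ : ℝ) * Real.sin γ *
          sech (((α * (x + ν * t) : ℝ) : ℂ) + Complex.I * γ / 2) *
          Complex.exp (-Complex.I * β * (t + ν * x)) :=
  backlund_zero_to_soliton_general δ γ hδ l hl φ₁ φ₂ hφ₁ hφ₂ ν α β hν hα hβ
end
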